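/- arXiv:2605.11309 — 6 statements merged into one kernel-verified Lean document; each statement's English description precedes it below -/
import Mathlib

section
/- Suppose the directed graph G = (V,E) satisfies the 2-reach condition with parameter ρ = 1 (i.e., for every F1, F2 ⊆ V with |F1| ≤ f and |F2| ≤ f, and every u ∈ V−F1 and v ∈ V−F2, the sets reach_u(F1) and reach_v(F2) intersect). Then G satisfies the 1-reach condition with parameter ρ = f+1 (i.e., for every F ⊆ V with |F| ≤ f and all u, v ∈ V−F, |reach_u(F) ∩ reach_v(F)| ≥ f+1). -/
/-- Edge relation of the induced subgraph `G_F` (both endpoints avoid `F`). -/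
def stepRel {V : Type*} (E : V → V → Prop) (F : Set V) (a b : V) : Prop :=
  a ∉ F ∧ b ∉ F ∧ E a b

/-- `reachSet E F u`: vertices `w ∉ F` having a directed path (possibly trivial)
to `u` that uses only vertices outside `F`. -/
def reachSet {V : Type*} (E : V → V → Prop) (F : Set V) (u : V) : Set V :=
  {w | w ∉ F ∧ Relation.ReflTransGen (stepRel E F) w u}

/-- `S` is a source component of the induced subgraph `G_F`: it is a strongly
connected component of `G_F` (an equivalence class of mutual reachability,
i.e. a maximal mutually-connected set), with no incoming edges of `G_F` from
vertices outside `S`. -/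
def IsSourceComponent {V : Type*} (E : V → V → Prop) (F : Set V) (S : Set V) : Prop :=
  (∃ v ∉ F, S = {w | Relation.ReflTransGen (stepRel E F) v w ∧
                     Relation.ReflTransGen (stepRel E F) w v}) ∧
  ∀ a ∉ S, ∀ b ∈ S, ¬ stepRel E F a b

/-!
Fix `F` with `|F| ≤ f`. Taking `F₁ = F₂ = F` in the 2-reach condition, any two reach sets of
`G_F` meet, and a point `w` of `reach_z(F) ∩ reach_s(F)` has `reach_w(F)` inside both; so an
inclusion-minimal reach set `reach_s(F)` lies in every reach set, in particular in
`X = reach_u(F) ∩ reach_v(F)`. If `|X| ≤ f`, the 2-reach condition for `F₁ = F`, `F₂ = X`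
gives a vertex of `reach_s(F) ⊆ X` outside `X`.
-/

section Reach

variable {V : Type*} (E : V → V → Prop) (F : Set V)

lemma reachSet_subset_of_mem {w z : V} (h : w ∈ reachSet E F z) :
    reachSet E F w ⊆ reachSet E F z :=
  fun _ ⟨hx, hpath⟩ => ⟨hx, hpath.trans h.2⟩

lemma exists_reachSet_subset_forall [Finite V]
    (hpair : ∀ u ∉ F, ∀ v ∉ F, (reachSet E F u ∩ reachSet E F v).Nonempty)
    {u : V} (hu : u ∉ F) :
    ∃ s ∉ F, ∀ z ∉ F, reachSet E F s ⊆ reachSet E F z := by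
  obtain ⟨s, hs, hmin⟩ :=
    exists_minimalFor_of_wellFoundedLT (· ∉ F) (reachSet E F) ⟨u, hu⟩
  refine ⟨s, hs, fun z hz => ?_⟩
  obtain ⟨w, hwz, hws⟩ := hpair z hz s hs
  calc reachSet E F s ⊆ reachSet E F w := hmin hwz.1 (reachSet_subset_of_mem E F hws)
    _ ⊆ reachSet E F z := reachSet_subset_of_mem E F hwz

end Reach

theorem two_reach_one_implies_one_reach_fplus1_general {V : Type*} [Fintype V]
    (E : V → V → Prop) (f : ℕ) (hfn : f < Fintype.card V)
    (h2 : ∀ F1 F2 : Set V, F1.ncard ≤ f → F2.ncard ≤ f →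
      ∀ u ∉ F1, ∀ v ∉ F2, (reachSet E F1 u ∩ reachSet E F2 v).Nonempty) :
    ∀ F : Set V, F.ncard ≤ f → ∀ u ∉ F, ∀ v ∉ F,
      f + 1 ≤ (reachSet E F u ∩ reachSet E F v).ncard := by
  intro F hF u hu v hv
  obtain ⟨s, hs, hs_least⟩ :=
    exists_reachSet_subset_forall E F (fun u hu v hv => h2 F F hF hF u hu v hv) hu
  by_contra! hlt
  set X := reachSet E F u ∩ reachSet E F v
  have hXf : X.ncard ≤ f := Nat.lt_succ_iff.mp hlt
  have hX_ne : X ≠ Set.univ := fun hX => by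
    rw [hX, Set.ncard_univ, Nat.card_eq_fintype_card] at hXf
    omega
  obtain ⟨t, ht⟩ := (Set.ne_univ_iff_exists_notMem X).mp hX_ne
  obtain ⟨w, hws, hwt⟩ := h2 F X hF hXf s hs t ht
  exact hwt.1 ⟨hs_least u hu hws, hs_least v hv hws⟩

theorem two_reach_one_implies_one_reach_fplus1 {V : Type*} [Fintype V]
    (E : V → V → Prop) (f : ℕ) (hf : 0 < f) (hfn : f < Fintype.card V)
    (h2 : ∀ F1 F2 : Set V, F1.ncard ≤ f → F2.ncard ≤ f →
      ∀ u ∉ F1, ∀ v ∉ F2, (reachSet E F1 u ∩ reachSet E F2 v).Nonempty) :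
    ∀ F : Set V, F.ncard ≤ f → ∀ u ∉ F, ∀ v ∉ F,
      f + 1 ≤ (reachSet E F u ∩ reachSet E F v).ncard :=
  two_reach_one_implies_one_reach_fplus1_general E f hfn h2
end

section
/- Suppose the directed graph G = (V,E) satisfies the 3-reach condition with parameter ρ = 1 (i.e., for every F, F1, F2 ⊆ V with |F| ≤ f, |F1| ≤ f, |F2| ≤ f, and every u ∈ V−F−F1 and v ∈ V−F−F2, the sets reach_u(F∪F1) and reach_v(F∪F2) intersect). Then G satisfies the 2-reach condition with parameter ρ = f+1 (i.e., for every F1, F2 ⊆ V with |F1| ≤ f and |F2| ≤ f, and every u ∈ V−F1 and v ∈ V−F2, |reach_u(F1) ∩ reach_v(F2)| ≥ f+1). -/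
/- With `F = ∅`, the 3-reach condition says that `reach_u(F1)` meets every `reach_v(F2)`.
Taking `F2 = reach_u(F1)` shows that `reach_u(F1)` cannot have at most `f` elements, since
then `F2` misses some vertex `v` and `reach_v(F2)` is disjoint from `F2`. Now if
`I = reach_u(F1) ∩ reach_v(F2)` had at most `f` elements, pick `u' ∈ reach_u(F1) \ I` and
`v' ∈ reach_v(F2) \ I`; removing `I` as the common fault set, the 3-reach condition yields a
common source of `u'` and `v'` outside `I`, which lies in `reach_u(F1) ∩ reach_v(F2) = I`. -/

section Reach

variable {V : Type*} {E : V → V → Prop}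

theorem reachSet_anti {F F' : Set V} (h : F ⊆ F') (u : V) :
    reachSet E F' u ⊆ reachSet E F u := fun _ ⟨hw, hwu⟩ =>
  ⟨fun hx => hw (h hx), Relation.ReflTransGen.mono
    (fun _ _ ⟨ha, hb, hab⟩ => ⟨fun hx => ha (h hx), fun hx => hb (h hx), hab⟩) _ _ hwu⟩

theorem reachSet_trans {F : Set V} {u v w : V} (hw : w ∈ reachSet E F v)
    (hv : v ∈ reachSet E F u) : w ∈ reachSet E F u :=
  ⟨hw.1, hw.2.trans hv.2⟩

theorem lt_ncard_reachSet [Fintype V] {f : ℕ} (hfn : f < Fintype.card V)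
    (hmeet : ∀ F1 F2 : Set V, F1.ncard ≤ f → F2.ncard ≤ f → ∀ u ∉ F1, ∀ v ∉ F2,
      (reachSet E F1 u ∩ reachSet E F2 v).Nonempty)
    {F : Set V} (hF : F.ncard ≤ f) {u : V} (hu : u ∉ F) :
    f < (reachSet E F u).ncard := by
  by_contra! hR
  obtain ⟨v, hv⟩ : ∃ v, v ∉ reachSet E F u := by
    by_contra! hall
    rw [Set.eq_univ_of_forall hall, Set.ncard_univ, Nat.card_eq_fintype_card] at hR
    omega
  obtain ⟨w, hwu, hwv⟩ := hmeet F _ hF hR u hu v hv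
  exact hwv.1 hwu

theorem not_reachSet_inter_subset {f : ℕ}
    (h3 : ∀ F F1 F2 : Set V, F.ncard ≤ f → F1.ncard ≤ f → F2.ncard ≤ f →
      ∀ u ∉ F ∪ F1, ∀ v ∉ F ∪ F2,
        (reachSet E (F ∪ F1) u ∩ reachSet E (F ∪ F2) v).Nonempty)
    {F1 F2 I : Set V} (h1 : F1.ncard ≤ f) (h2 : F2.ncard ≤ f) (hI : I.ncard ≤ f) {u v : V}
    (hu : ¬ reachSet E F1 u ⊆ I) (hv : ¬ reachSet E F2 v ⊆ I) :
    ¬ reachSet E F1 u ∩ reachSet E F2 v ⊆ I := by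
  obtain ⟨u', hu'R, hu'I⟩ := Set.not_subset.mp hu
  obtain ⟨v', hv'R, hv'I⟩ := Set.not_subset.mp hv
  obtain ⟨w, hwu', hwv'⟩ := h3 I F1 F2 hI h1 h2 u' (by simp [hu'I, hu'R.1]) v'
    (by simp [hv'I, hv'R.1])
  have hwu : w ∈ reachSet E F1 u :=
    reachSet_trans (reachSet_anti Set.subset_union_right u' hwu') hu'R
  have hwv : w ∈ reachSet E F2 v :=
    reachSet_trans (reachSet_anti Set.subset_union_right v' hwv') hv'R
  exact fun hsub => hwu'.1 (Or.inl (hsub ⟨hwu, hwv⟩))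

end Reach

theorem three_reach_one_implies_two_reach_fplus1_general {V : Type*} [Fintype V]
    (E : V → V → Prop) (f : ℕ) (hfn : f < Fintype.card V)
    (h3 : ∀ F F1 F2 : Set V, F.ncard ≤ f → F1.ncard ≤ f → F2.ncard ≤ f →
      ∀ u ∉ F ∪ F1, ∀ v ∉ F ∪ F2,
        (reachSet E (F ∪ F1) u ∩ reachSet E (F ∪ F2) v).Nonempty) :
    ∀ F1 F2 : Set V, F1.ncard ≤ f → F2.ncard ≤ f →
      ∀ u ∉ F1, ∀ v ∉ F2,
        f + 1 ≤ (reachSet E F1 u ∩ reachSet E F2 v).ncard := by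
  have hmeet : ∀ F1 F2 : Set V, F1.ncard ≤ f → F2.ncard ≤ f → ∀ u ∉ F1, ∀ v ∉ F2,
      (reachSet E F1 u ∩ reachSet E F2 v).Nonempty := by
    simpa using h3 ∅
  intro F1 F2 h1 h2 u hu v hv
  by_contra! hI
  have not_subset {F : Set V} (hF : F.ncard ≤ f) {x : V} (hx : x ∉ F) :
      ¬ reachSet E F x ⊆ reachSet E F1 u ∩ reachSet E F2 v := fun hsub =>
    (Set.ncard_le_ncard hsub).not_gt (by have := lt_ncard_reachSet hfn hmeet hF hx; omega)
  exact not_reachSet_inter_subset h3 h1 h2 (by omega) (not_subset h1 hu) (not_subset h2 hv)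
    subset_rfl

theorem three_reach_one_implies_two_reach_fplus1 {V : Type*} [Fintype V]
    (E : V → V → Prop) (f : ℕ) (hf : 0 < f) (hfn : f < Fintype.card V)
    (h3 : ∀ F F1 F2 : Set V, F.ncard ≤ f → F1.ncard ≤ f → F2.ncard ≤ f →
      ∀ u ∉ F ∪ F1, ∀ v ∉ F ∪ F2,
        (reachSet E (F ∪ F1) u ∩ reachSet E (F ∪ F2) v).Nonempty) :
    ∀ F1 F2 : Set V, F1.ncard ≤ f → F2.ncard ≤ f →
      ∀ u ∉ F1, ∀ v ∉ F2,
        f + 1 ≤ (reachSet E F1 u ∩ reachSet E F2 v).ncard :=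
  three_reach_one_implies_two_reach_fplus1_general E f hfn h3
end

section
/- Let G = (V,E) be a directed graph on n vertices with 0 < f < n. Suppose that for every F ⊆ V with |F| ≤ f and all u, v ∈ V−F, the sets reach_u(F) and reach_v(F) have nonempty intersection. Then for every F ⊆ V with |F| ≤ f, the induced subgraph G_F has a unique source component. -/
/-! A source component exists: among the vertices of `G_F`, take one whose set of ancestors is
as small as possible; an edge entering its strongly connected component would come from a
vertex with strictly fewer ancestors. It is unique: the source components of `v` and `v'`
contain every ancestor of `v` and `v'` respectively, so a common ancestor `w` of `v` and `v'`
lies in both, and both are the component of `w`. -/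

open Relation

section StronglyConnected

variable {V : Type*} {r : V → V → Prop}

def sccOf (r : V → V → Prop) (v : V) : Set V :=
  {w | ReflTransGen r v w ∧ ReflTransGen r w v}

theorem sccOf_eq_of_mem {v w : V} (hw : w ∈ sccOf r v) : sccOf r w = sccOf r v := by
  ext x
  constructor
  · rintro ⟨hwx, hxw⟩
    exact ⟨hw.1.trans hwx, hxw.trans hw.2⟩
  · rintro ⟨hvx, hxv⟩
    exact ⟨hw.2.trans hvx, hxv.trans hw.1⟩

theorem mem_of_reflTransGen_of_forall_not_rel {S : Set V} (hS : ∀ a ∉ S, ∀ b ∈ S, ¬ r a b)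
    {a b : V} (hab : ReflTransGen r a b) (hb : b ∈ S) : a ∈ S := by
  induction hab using ReflTransGen.head_induction_on with
  | refl => exact hb
  | head hstep _ ih => exact by_contra fun ha => hS _ ha _ ih hstep

theorem exists_reflTransGen_forall_not_rel_sccOf [Finite V] (v₀ : V) :
    ∃ v, ReflTransGen r v v₀ ∧ ∀ a ∉ sccOf r v, ∀ b ∈ sccOf r v, ¬ r a b := by
  let ancestors : V → Set V := fun v => {w | ReflTransGen r w v}
  obtain ⟨v, hvv₀, hmin⟩ := Set.exists_min_image (ancestors v₀) (fun v => (ancestors v).ncard)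
    (Set.toFinite _) ⟨v₀, ReflTransGen.refl⟩
  refine ⟨v, hvv₀, fun a ha b hb hab => ?_⟩
  have hav : ReflTransGen r a v := ReflTransGen.head hab hb.2
  have hsub : ancestors a ⊂ ancestors v :=
    ⟨fun w hwa => hwa.trans hav, fun hsup => ha ⟨hsup ReflTransGen.refl, hav⟩⟩
  exact (Set.ncard_lt_ncard hsub (Set.toFinite _)).not_ge (hmin a (hav.trans hvv₀))

end StronglyConnected

section SourceComponent

variable {V : Type*} {E : V → V → Prop} {F : Set V}

theorem notMem_of_reflTransGen_stepRel {a b : V} (hab : ReflTransGen (stepRel E F) a b)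
    (hb : b ∉ F) : a ∉ F := by
  rcases hab.cases_head with rfl | ⟨c, hac, -⟩
  · exact hb
  · exact hac.1

theorem exists_isSourceComponent [Finite V] {v₀ : V} (hv₀ : v₀ ∉ F) :
    ∃ S, IsSourceComponent E F S := by
  obtain ⟨v, hvv₀, hS⟩ := exists_reflTransGen_forall_not_rel_sccOf (r := stepRel E F) v₀
  exact ⟨sccOf (stepRel E F) v, ⟨v, notMem_of_reflTransGen_stepRel hvv₀ hv₀, rfl⟩, hS⟩

theorem IsSourceComponent.eq_sccOf_of_reflTransGen {S : Set V} (hS : IsSourceComponent E F S)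
    {v w : V} (hv : v ∈ S) (hwv : ReflTransGen (stepRel E F) w v) :
    S = sccOf (stepRel E F) w := by
  obtain ⟨⟨u, -, rfl⟩, hnot⟩ := hS
  exact (sccOf_eq_of_mem (mem_of_reflTransGen_of_forall_not_rel hnot hwv hv)).symm

theorem IsSourceComponent.eq_of_reachSet_inter_nonempty {S T : Set V} (hS : IsSourceComponent E F S)
    (hT : IsSourceComponent E F T)
    (hreach : ∀ u ∉ F, ∀ v ∉ F, (reachSet E F u ∩ reachSet E F v).Nonempty) : S = T := by
  obtain ⟨u, hu, rfl⟩ := hS.1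
  obtain ⟨v, hv, rfl⟩ := hT.1
  obtain ⟨w, ⟨-, hwu⟩, ⟨-, hwv⟩⟩ := hreach u hu v hv
  rw [hS.eq_sccOf_of_reflTransGen ⟨.refl, .refl⟩ hwu,
    hT.eq_sccOf_of_reflTransGen ⟨.refl, .refl⟩ hwv]

end SourceComponent

theorem one_reach_one_implies_unique_source_component_general {V : Type*} [Fintype V]
    (E : V → V → Prop) (f : ℕ) (hfn : f < Fintype.card V)
    (h1 : ∀ F : Set V, F.ncard ≤ f → ∀ u ∉ F, ∀ v ∉ F,
      (reachSet E F u ∩ reachSet E F v).Nonempty) :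
    ∀ F : Set V, F.ncard ≤ f → ∃! S : Set V, IsSourceComponent E F S := by
  intro F hF
  have hFne : F ≠ Set.univ := by
    rintro rfl
    rw [Set.ncard_univ, Nat.card_eq_fintype_card] at hF
    omega
  obtain ⟨v₀, hv₀⟩ := (Set.ne_univ_iff_exists_notMem F).1 hFne
  obtain ⟨S, hS⟩ := exists_isSourceComponent (E := E) hv₀
  exact ⟨S, hS, fun T hT => hT.eq_of_reachSet_inter_nonempty hS (h1 F hF)⟩

theorem one_reach_one_implies_unique_source_component {V : Type*} [Fintype V]
    (E : V → V → Prop) (f : ℕ) (hf : 0 < f) (hfn : f < Fintype.card V)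
    (h1 : ∀ F : Set V, F.ncard ≤ f → ∀ u ∉ F, ∀ v ∉ F,
      (reachSet E F u ∩ reachSet E F v).Nonempty) :
    ∀ F : Set V, F.ncard ≤ f → ∃! S : Set V, IsSourceComponent E F S :=
  one_reach_one_implies_unique_source_component_general E f hfn h1
end

section
/- Suppose the directed graph G = (V,E) satisfies Condition S: for every F ⊆ V with |F| ≤ f, the induced subgraph G_F has a unique source component, and that source component contains at least f+1 vertices. Then G satisfies the 1-reach condition with parameter ρ = f+1: for every F ⊆ V with |F| ≤ f and all u, v ∈ V−F, |reach_u(F) ∩ reach_v(F)| ≥ f+1. -/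
/-- Condition S: for every `F` with `|F| ≤ f`, the graph `G_F` has a unique
source component, and that source component has at least `f+1` vertices. -/
def ConditionS {V : Type*} (E : V → V → Prop) (f : ℕ) : Prop :=
  ∀ F : Set V, F.ncard ≤ f →
    ∃ S : Set V, IsSourceComponent E F S ∧ f + 1 ≤ S.ncard ∧
      ∀ S' : Set V, IsSourceComponent E F S' → S' = S

open Relation

theorem Relation.ReflTransGen.exists_minimal_ancestor {α : Type*} [Finite α]
    (r : α → α → Prop) (u : α) :
    ∃ w, ReflTransGen r w u ∧ ∀ a, ReflTransGen r a w → ReflTransGen r w a := by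
  obtain ⟨w, hwu, hmin⟩ := Set.exists_min_image {w | ReflTransGen r w u}
    (fun w => {x | ReflTransGen r x w}.ncard) (Set.toFinite _) ⟨u, .refl⟩
  refine ⟨w, hwu, fun a haw => ?_⟩
  by_contra hwa
  have hsub : {x | ReflTransGen r x a} ⊂ {x | ReflTransGen r x w} :=
    ⟨fun x hx => hx.trans haw, fun h => hwa (h ReflTransGen.refl)⟩
  exact (Set.ncard_lt_ncard hsub (Set.toFinite _)).not_ge (hmin a (haw.trans hwu))

section StepRel

variable {V : Type*} {E : V → V → Prop} {F : Set V} {a b : V}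

theorem notMem_left_of_reflTransGen_stepRel (h : ReflTransGen (stepRel E F) a b) (hb : b ∉ F) :
    a ∉ F := by
  rcases h.cases_head with rfl | ⟨c, hac, -⟩
  exacts [hb, hac.1]

theorem notMem_right_of_reflTransGen_stepRel (h : ReflTransGen (stepRel E F) a b) (ha : a ∉ F) :
    b ∉ F := by
  rcases h.cases_tail with rfl | ⟨c, -, hcb⟩
  exacts [ha, hcb.2.1]

theorem isSourceComponent_of_forall_reflTransGen {w : V} (hw : w ∉ F)
    (hmin : ∀ a, ReflTransGen (stepRel E F) a w → ReflTransGen (stepRel E F) w a) :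
    IsSourceComponent E F
      {x | ReflTransGen (stepRel E F) w x ∧ ReflTransGen (stepRel E F) x w} := by
  refine ⟨⟨w, hw, rfl⟩, ?_⟩
  rintro a ha b ⟨-, hbw⟩ hab
  have haw := (ReflTransGen.single hab).trans hbw
  exact ha ⟨hmin a haw, haw⟩

theorem exists_isSourceComponent_subset_reachSet [Finite V] {u : V} (hu : u ∉ F) :
    ∃ S, IsSourceComponent E F S ∧ S ⊆ reachSet E F u := by
  obtain ⟨w, hwu, hmin⟩ := ReflTransGen.exists_minimal_ancestor (stepRel E F) u
  have hw := notMem_left_of_reflTransGen_stepRel hwu hu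
  refine ⟨_, isSourceComponent_of_forall_reflTransGen hw hmin, fun x ⟨hwx, hxw⟩ => ?_⟩
  exact ⟨notMem_right_of_reflTransGen_stepRel hwx hw, hxw.trans hwu⟩

end StepRel

theorem conditionS_implies_one_reach_fplus1_general {V : Type*} [Fintype V]
    (E : V → V → Prop) (f : ℕ)
    (hCS : ConditionS E f) :
    ∀ F : Set V, F.ncard ≤ f → ∀ u ∉ F, ∀ v ∉ F,
      f + 1 ≤ (reachSet E F u ∩ reachSet E F v).ncard := by
  intro F hF u hu v hv
  obtain ⟨S, -, hcard, huniq⟩ := hCS F hF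
  obtain ⟨Su, hSu, hSu_sub⟩ := exists_isSourceComponent_subset_reachSet (E := E) hu
  obtain ⟨Sv, hSv, hSv_sub⟩ := exists_isSourceComponent_subset_reachSet (E := E) hv
  rw [huniq Su hSu] at hSu_sub
  rw [huniq Sv hSv] at hSv_sub
  exact hcard.trans (Set.ncard_le_ncard (Set.subset_inter hSu_sub hSv_sub) (Set.toFinite _))

theorem conditionS_implies_one_reach_fplus1 {V : Type*} [Fintype V]
    (E : V → V → Prop) (f : ℕ) (hf : 0 < f) (hfn : f < Fintype.card V)
    (hCS : ConditionS E f) :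
    ∀ F : Set V, F.ncard ≤ f → ∀ u ∉ F, ∀ v ∉ F,
      f + 1 ≤ (reachSet E F u ∩ reachSet E F v).ncard :=
  conditionS_implies_one_reach_fplus1_general E f hCS
end

section
/- Suppose the directed graph G = (V,E) satisfies Condition S. Let F ⊆ V be nonempty with |F| ≤ f. Then every node w ∈ F has an incoming edge from some node of V−F, i.e., there exists u ∈ V−F with (u,w) ∈ E. -/
/-!
If some `w ∈ F` had no in-neighbour outside `F`, then in `G_{F - {w}}` nothing but `w` itself
reaches `w`, so `{w}` is a source component there. Since `|F - {w}| ≤ f`, Condition S forces this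
to be the unique source component and to have at least `f + 1 ≥ 2` vertices, a contradiction.
-/

theorem Relation.ReflTransGen.eq_of_forall_rel_eq {α : Type*} {r : α → α → Prop} {a b : α}
    (h : ∀ c, r c b → c = b) (hab : Relation.ReflTransGen r a b) : a = b := by
  induction hab using Relation.ReflTransGen.head_induction_on with
  | refl => rfl
  | head hac _ ih => exact h _ (ih ▸ hac)

theorem isSourceComponent_singleton {V : Type*} {E : V → V → Prop} {F : Set V} {w : V}
    (hw : w ∉ F) (hin : ∀ a ∉ F, E a w → a = w) : IsSourceComponent E F {w} := by
  have reach_eq : ∀ a, Relation.ReflTransGen (stepRel E F) a w → a = w :=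
    fun a => Relation.ReflTransGen.eq_of_forall_rel_eq fun c ⟨hc, _, hcw⟩ => hin c hc hcw
  refine ⟨⟨w, hw, ?_⟩, ?_⟩
  · ext a
    simp only [Set.mem_singleton_iff, Set.mem_ofPred_eq]
    refine ⟨fun ha => ha ▸ ⟨.refl, .refl⟩, fun ⟨_, haw⟩ => reach_eq a haw⟩
  · rintro a ha b rfl hab
    exact ha (reach_eq a (.single hab))

theorem ConditionS.succ_le_ncard {V : Type*} {E : V → V → Prop} {f : ℕ} (hCS : ConditionS E f)
    {F S : Set V} (hF : F.ncard ≤ f) (hS : IsSourceComponent E F S) : f + 1 ≤ S.ncard := by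
  obtain ⟨S₀, -, hS₀, huniq⟩ := hCS F hF
  rwa [huniq S hS]

theorem every_F_node_has_incoming_from_outside_general {V : Type*}
    (E : V → V → Prop) (f : ℕ) (hf : 0 < f)
    (hCS : ConditionS E f) (F : Set V) (hF : F.ncard ≤ f) :
    ∀ w ∈ F, ∃ u ∉ F, E u w := by
  rintro w -
  by_contra! hno
  have hin : ∀ a ∉ F \ {w}, E a w → a = w := fun a ha haw =>
    by_contra fun hne => hno a (fun haF => ha ⟨haF, hne⟩) haw
  have hsrc : IsSourceComponent E (F \ {w}) {w} := isSourceComponent_singleton (by simp) hin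
  have hcard : (F \ {w}).ncard ≤ f := (Set.ncard_sdiff_singleton_le F w).trans hF
  have hsize := hCS.succ_le_ncard hcard hsrc
  rw [Set.ncard_singleton] at hsize
  omega

theorem every_F_node_has_incoming_from_outside {V : Type*} [Fintype V]
    (E : V → V → Prop) (f : ℕ) (hf : 0 < f) (hfn : f < Fintype.card V)
    (hCS : ConditionS E f) (F : Set V) (hFne : F.Nonempty) (hF : F.ncard ≤ f) :
    ∀ w ∈ F, ∃ u ∉ F, E u w :=
  every_F_node_has_incoming_from_outside_general E f hf hCS F hF
end

section
/- Suppose the directed graph G = (V,E) satisfies Condition S. Suppose F ⊆ V with |F| = f, and the unique source component S_F of G_F contains exactly f+p nodes, where 0 < p ≤ f. Let F1 ⊆ F be any subset of size k, where p ≤ k ≤ f. Then in the bipartite graph with parts F and S_F whose edges are the edges of E directed from F to S_F, there exists a matching of size at least k−p+1 consisting of edges from F1 to S_F (i.e., there exist k−p+1 edges (x_i, y_i) ∈ E with x_i ∈ F1, y_i ∈ S_F, the x_i pairwise distinct and the y_i pairwise distinct). -/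
/-!
Every `X ⊆ F` has more than `|X| - p` out-neighbours in `S_F`: otherwise, moving `X` out of
the fault set and a set `R ⊇ N(X)` of `|N(X)| + p` vertices of `S_F` into it leaves a set of
at most `f` vertices of `S_F` without incoming edges. That set contains a source component,
contradicting Condition S. Hall's theorem with deficiency `p - 1` then yields the matching.
-/

open Relation Finset

theorem Finset.exists_matching_of_card_le_card_biUnion_add {ι β : Type*} [Fintype ι]
    [DecidableEq β] (t : ι → Finset β) {d m : ℕ} (hm : m + d ≤ Fintype.card ι)
    (h : ∀ s : Finset ι, #s ≤ #(s.biUnion t) + d) :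
    ∃ (x : Fin m ↪ ι) (y : Fin m ↪ β), ∀ i, y i ∈ t (x i) := by
  classical
  -- Hall's condition holds once `d` new vertices, adjacent to every `i`, are added.
  obtain ⟨M, hMinj, hMt⟩ := (all_card_le_biUnion_card_iff_exists_injective
      fun i => (t i).disjSum (univ : Finset (Fin d))).1 fun s => by
    rcases s.eq_empty_or_nonempty with rfl | ⟨i₀, hi₀⟩
    · simp
    calc #s ≤ #((s.biUnion t).disjSum (univ : Finset (Fin d))) := by
          simpa [card_disjSum] using h s
      _ ≤ _ := card_le_card fun z hz => by
          rcases z with b | j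
          · simpa [mem_biUnion] using hz
          · exact mem_biUnion.2 ⟨i₀, hi₀, by simp⟩
  set L : Finset ι := univ.filter fun i => (M i).isLeft
  have hL : m ≤ #L := by
    have hLc : #Lᶜ ≤ d :=
      calc #Lᶜ ≤ #((univ : Finset (Fin d)).map .inr) :=
            card_le_card_of_injOn M (fun i hi => by
              rcases hMi : M i with b | j
              · simp [L, hMi] at hi
              · simp) hMinj.injOn
        _ = d := by simp
    rw [card_compl] at hLc
    omega
  obtain ⟨e⟩ : Nonempty (Fin m ↪ L) :=
    Function.Embedding.nonempty_iff_card_le.2 (by simpa using hL)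
  have hleft (i : L) : (M i).isLeft := (mem_filter.1 i.2).2
  let y : L ↪ β := ⟨fun i => (M i).getLeft (hleft i), fun i j hij =>
    Subtype.val_injective <| hMinj <| by
      rw [← Sum.inl_getLeft _ (hleft i), ← Sum.inl_getLeft _ (hleft j)]; exact congrArg _ hij⟩
  refine ⟨e.trans (.subtype _), e.trans y, fun k => ?_⟩
  have hk := hMt (e k)
  rwa [← Sum.inl_getLeft _ (hleft (e k)), inl_mem_disjSum] at hk

section SourceComponent

variable {V : Type*} {E : V → V → Prop} {F C S : Set V}

def NoEdgesInto (E : V → V → Prop) (F C : Set V) : Prop :=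
  ∀ a ∉ C, ∀ b ∈ C, ¬ stepRel E F a b

lemma NoEdgesInto.mem_of_reflTransGen (hC : NoEdgesInto E F C) {w v : V}
    (h : ReflTransGen (stepRel E F) w v) (hv : v ∈ C) : w ∈ C := by
  induction h using ReflTransGen.head_induction_on with
  | refl => exact hv
  | head hstep _ ih => exact by_contra fun hw => hC _ hw _ ih hstep

lemma IsSourceComponent.disjoint (hS : IsSourceComponent E F S) : Disjoint S F := by
  obtain ⟨⟨v, hv, rfl⟩, -⟩ := hS
  refine Set.disjoint_left.2 fun w hw => ?_
  rcases hw.2.cases_head with rfl | ⟨c, hc, -⟩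
  · exact hv
  · exact hc.1

lemma reachSet_subset_of_reflTransGen {a u : V} (h : ReflTransGen (stepRel E F) a u) :
    reachSet E F a ⊆ reachSet E F u :=
  fun _ ⟨hw, hwa⟩ => ⟨hw, hwa.trans h⟩

/-- A vertex of `C` with the fewest ancestors generates a source component. -/
theorem exists_isSourceComponent_subset [Finite V] (hne : C.Nonempty) (hCF : Disjoint C F)
    (hC : NoEdgesInto E F C) : ∃ S, IsSourceComponent E F S ∧ S ⊆ C := by
  obtain ⟨u, huC, hmin⟩ := C.exists_min_image (fun w => (reachSet E F w).ncard) C.toFinite hne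
  have huF : u ∉ F := Set.disjoint_left.1 hCF huC
  refine ⟨{w | ReflTransGen (stepRel E F) u w ∧ ReflTransGen (stepRel E F) w u},
    ⟨⟨u, huF, rfl⟩, ?_⟩, fun w hw => hC.mem_of_reflTransGen hw.2 huC⟩
  rintro a ha b ⟨-, hbu⟩ hab
  have hau : ReflTransGen (stepRel E F) a u := .head hab hbu
  have heq : reachSet E F a = reachSet E F u :=
    Set.eq_of_subset_of_ncard_le (reachSet_subset_of_reflTransGen hau)
      (hmin a (hC.mem_of_reflTransGen hau huC))
  have hua : u ∈ reachSet E F a := heq ▸ ⟨huF, .refl⟩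
  exact ha ⟨hua.2, hau⟩

theorem ConditionS.le_ncard_of_noEdgesInto [Finite V] {f : ℕ} (hCS : ConditionS E f)
    (hF : F.ncard ≤ f) (hne : C.Nonempty) (hCF : Disjoint C F) (hC : NoEdgesInto E F C) :
    f + 1 ≤ C.ncard := by
  obtain ⟨S, -, hcard, huniq⟩ := hCS F hF
  obtain ⟨S', hS', hsub⟩ := exists_isSourceComponent_subset hne hCF hC
  rw [huniq S' hS'] at hsub
  exact hcard.trans (Set.ncard_le_ncard hsub)

lemma IsSourceComponent.noEdgesInto_sdiff (hS : IsSourceComponent E F S) {X R : Set V}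
    (hR : {y ∈ S | ∃ x ∈ X, E x y} ⊆ R) : NoEdgesInto E (F \ X ∪ R) (S \ R) := by
  rintro a ha b ⟨hbS, hbR⟩ ⟨haF', -, hab⟩
  by_cases haS : a ∈ S
  · exact haF' (Or.inr (by_contra fun haR => ha ⟨haS, haR⟩))
  by_cases haF : a ∈ F
  · exact hbR (hR ⟨hbS, a, by_contra fun haX => haF' (Or.inl ⟨haF, haX⟩), hab⟩)
  · exact hS.2 a haS b hbS ⟨haF, Set.disjoint_left.1 hS.disjoint hbS, hab⟩

theorem ConditionS.ncard_lt_ncard_neighbors_add [Finite V] {f p : ℕ} (hCS : ConditionS E f)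
    (hF : F.ncard = f) (hS : IsSourceComponent E F S) (hScard : S.ncard = f + p) (hp : 0 < p)
    {X : Set V} (hX : X ⊆ F) : X.ncard < {y ∈ S | ∃ x ∈ X, E x y}.ncard + p := by
  set N := {y ∈ S | ∃ x ∈ X, E x y}
  by_contra! hXN
  have hXf : X.ncard ≤ f := hF ▸ Set.ncard_le_ncard hX
  obtain ⟨R, hNR, hRS, hRcard⟩ :=
    Set.exists_subsuperset_card_eq (fun y hy => hy.1 : N ⊆ S) (Nat.le_add_right _ p)
      (by omega : N.ncard + p ≤ S.ncard)
  have hF' : (F \ X ∪ R).ncard ≤ f :=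
    calc (F \ X ∪ R).ncard ≤ (F \ X).ncard + R.ncard := Set.ncard_union_le _ _
      _ ≤ f := by rw [Set.ncard_sdiff hX, hF, hRcard]; omega
  have hC : (S \ R).ncard = f - N.ncard := by rw [Set.ncard_sdiff hRS, hScard, hRcard]; omega
  have hCF : Disjoint (S \ R) (F \ X ∪ R) :=
    (hS.disjoint.mono Set.sdiff_subset Set.sdiff_subset).union_right Set.disjoint_sdiff_left
  have hne : (S \ R).Nonempty := Set.nonempty_of_ncard_ne_zero (by omega)
  have := hCS.le_ncard_of_noEdgesInto hF' hne hCF (hS.noEdgesInto_sdiff hNR)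
  omega

end SourceComponent

theorem matching_from_F1_to_source_component_general {V : Type*} [Fintype V]
    (E : V → V → Prop) (f p : ℕ)
    (hCS : ConditionS E f) (F : Set V) (hF : F.ncard = f)
    (S : Set V) (hS : IsSourceComponent E F S) (hScard : S.ncard = f + p)
    (hp0 : 0 < p)
    (k : ℕ) (hpk : p ≤ k)
    (F1 : Set V) (hF1 : F1 ⊆ F) (hF1card : F1.ncard = k) :
    ∃ x y : Fin (k - p + 1) → V,
      Function.Injective x ∧ Function.Injective y ∧
      ∀ i, x i ∈ F1 ∧ y i ∈ S ∧ E (x i) (y i) := by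
  classical
  set t : F1 → Finset V := fun x => univ.filter fun y => y ∈ S ∧ E x y
  have hHall (s : Finset F1) : #s ≤ #(s.biUnion t) + (p - 1) := by
    have hN : {y ∈ S | ∃ x ∈ Subtype.val '' (s : Set F1), E x y} = ↑(s.biUnion t) := by
      ext y; simp [t]
    have h := hCS.ncard_lt_ncard_neighbors_add hF hS hScard hp0
      (X := Subtype.val '' (s : Set F1)) (Set.image_subset_iff.2 fun x _ => hF1 x.2)
    rw [Set.ncard_image_of_injective _ Subtype.val_injective, Set.ncard_coe_finset, hN,
      Set.ncard_coe_finset] at h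
    omega
  have hcard : k - p + 1 + (p - 1) ≤ Fintype.card F1 := by
    rw [← Nat.card_eq_fintype_card, Nat.card_coe_set_eq, hF1card]; omega
  obtain ⟨x, y, hxy⟩ := exists_matching_of_card_le_card_biUnion_add t hcard hHall
  exact ⟨fun i => x i, y, Subtype.val_injective.comp x.injective, y.injective,
    fun i => ⟨(x i).2, by simpa [t] using hxy i⟩⟩

theorem matching_from_F1_to_source_component {V : Type*} [Fintype V]
    (E : V → V → Prop) (f p : ℕ) (hf : 0 < f) (hfn : f < Fintype.card V)
    (hCS : ConditionS E f) (F : Set V) (hF : F.ncard = f)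
    (S : Set V) (hS : IsSourceComponent E F S) (hScard : S.ncard = f + p)
    (hp0 : 0 < p) (hpf : p ≤ f)
    (k : ℕ) (hpk : p ≤ k) (hkf : k ≤ f)
    (F1 : Set V) (hF1 : F1 ⊆ F) (hF1card : F1.ncard = k) :
    ∃ x y : Fin (k - p + 1) → V,
      Function.Injective x ∧ Function.Injective y ∧
      ∀ i, x i ∈ F1 ∧ y i ∈ S ∧ E (x i) (y i) :=
  matching_from_F1_to_source_component_general E f p hCS F hF S hS hScard hp0 k hpk F1 hF1 hF1card
end
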